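/- Let m ≥ 1 be a natural number, A0, A1 nonempty finite index types, and let Θ : Matrix (Fin m) (Fin m) ℂ →ₗ (Matrix A0 A0 ℂ →ₗ Matrix A1 A1 ℂ) be a state-to-channel supermap satisfying: (i) the linear map ρ ↦ J(Θ[ρ]) from Matrix (Fin m) (Fin m) ℂ to Matrix (A0×A1) (A0×A1) ℂ is completely positive (its Choi matrix is positive semidefinite); (ii) Θ[ρ] is trace-preserving for every density matrix ρ; (iii) Θ[ρ] is a classical channel for every diagonal density matrix ρ (the MISC condition). If Θ[φ⁺_m] = N for a quantum channel N, where φ⁺_m ∈ Matrix (Fin m) (Fin m) ℂ is the maximally coherent state φ⁺_m i j = 1/m, then r_C(N) ≤ m, where r_C(N) := sInf {t : ℝ | 0 ≤ t ∧ ∃ E₀, E₀ is a classical channel ∧ (t • J(E₀) − J(N)).PosSemidef}. (Hence the exact single-shot coherence cost under MISC is at least the log-robustness: LR_C(N) ≤ C⁰_MISC(N).) -/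

import Mathlib

open Matrix Kronecker ComplexOrder

noncomputable section

/-- Choi matrix of a linear map between matrix algebras. -/
def choi {ι κ : Type*} [Fintype ι] [DecidableEq ι]
    (Φ : Matrix ι ι ℂ →ₗ[ℂ] Matrix κ κ ℂ) : Matrix (ι × κ) (ι × κ) ℂ :=
  Matrix.of fun p q => Φ (Matrix.single p.1 q.1 1) p.2 q.2

/-- Completely positive: the Choi matrix is positive semidefinite. -/
def IsCP {ι κ : Type*} [Fintype ι] [DecidableEq ι] [Fintype κ]
    (Φ : Matrix ι ι ℂ →ₗ[ℂ] Matrix κ κ ℂ) : Prop := (choi Φ).PosSemidef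

/-- Trace preserving. -/
def IsTP {ι κ : Type*} [Fintype ι] [Fintype κ]
    (Φ : Matrix ι ι ℂ →ₗ[ℂ] Matrix κ κ ℂ) : Prop := ∀ X, (Φ X).trace = X.trace

/-- Quantum channel: CP and TP. -/
def IsChannel {ι κ : Type*} [Fintype ι] [DecidableEq ι] [Fintype κ]
    (Φ : Matrix ι ι ℂ →ₗ[ℂ] Matrix κ κ ℂ) : Prop := IsCP Φ ∧ IsTP Φ

/-- Max-relative robustness `r(X‖Y)` between two maps. -/
def maxRelRobust {ι κ : Type*} [Fintype ι] [DecidableEq ι] [Fintype κ]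
    (X Y : Matrix ι ι ℂ →ₗ[ℂ] Matrix κ κ ℂ) : ℝ :=
  sInf {t : ℝ | 0 ≤ t ∧ (t • choi Y - choi X).PosSemidef}

/-- Dephasing (decoherence) map as a linear map. -/
def deph {ι : Type*} [DecidableEq ι] : Matrix ι ι ℂ →ₗ[ℂ] Matrix ι ι ℂ where
  toFun M := Matrix.of fun i j => if i = j then M i j else 0
  map_add' X Y := by
    ext i j
    by_cases h : i = j <;> simp [h]
  map_smul' c X := by
    ext i j
    by_cases h : i = j <;> simp [h]

/-- Classical map: invariant under dephasing of input and output. -/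
def IsClassical {ι κ : Type*} [DecidableEq ι] [DecidableEq κ]
    (Φ : Matrix ι ι ℂ →ₗ[ℂ] Matrix κ κ ℂ) : Prop := deph ∘ₗ Φ ∘ₗ deph = Φ

/-- Coherence robustness `r_C(N)`: robustness relative to classical channels. -/
def coherenceRobust {ι κ : Type*} [Fintype ι] [DecidableEq ι] [Fintype κ] [DecidableEq κ]
    (N : Matrix ι ι ℂ →ₗ[ℂ] Matrix κ κ ℂ) : ℝ :=
  sInf {t : ℝ | 0 ≤ t ∧ ∃ E₀ : Matrix ι ι ℂ →ₗ[ℂ] Matrix κ κ ℂ,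
    IsChannel E₀ ∧ IsClassical E₀ ∧ (t • choi E₀ - choi N).PosSemidef}

/-- The linear map `ρ ↦ J(Θ[ρ])` associated with a state-to-channel supermap. -/
def choiMapOf {ι A0 A1 : Type*} [Fintype ι] [DecidableEq ι] [Fintype A0] [DecidableEq A0]
    (Θ : Matrix ι ι ℂ →ₗ[ℂ] (Matrix A0 A0 ℂ →ₗ[ℂ] Matrix A1 A1 ℂ)) :
    Matrix ι ι ℂ →ₗ[ℂ] Matrix (A0 × A1) (A0 × A1) ℂ where
  toFun ρ := choi (Θ ρ)
  map_add' X Y := by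
    ext p q
    simp [choi, map_add]
  map_smul' c X := by
    ext p q
    simp [choi, _root_.map_smul]

/-- The maximally coherent state `φ⁺_m i j = 1/m`. -/
def maxCoh (m : ℕ) : Matrix (Fin m) (Fin m) ℂ :=
  Matrix.of fun _ _ => (1 : ℂ) / (m : ℂ)


lemma choi_apply' {ι κ : Type*} [Fintype ι] [DecidableEq ι]
    (Φ : Matrix ι ι ℂ →ₗ[ℂ] Matrix κ κ ℂ) (X : Matrix ι ι ℂ) (k l : κ) :
    Φ X k l = ∑ i, ∑ j, X i j * choi Φ (i, k) (j, l) := by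
  have h : X = ∑ i, ∑ j, X i j • Matrix.single i j (1 : ℂ) := by
    conv_lhs => rw [matrix_eq_sum_single X]
    simp [Matrix.smul_single]
  conv_lhs => rw [h]
  rw [map_sum]
  simp only [Matrix.sum_apply]
  refine Finset.sum_congr rfl fun i _ => ?_
  rw [map_sum]
  simp only [Matrix.sum_apply]
  refine Finset.sum_congr rfl fun j _ => ?_
  rw [_root_.map_smul]
  simp [choi]

lemma cp_pos {ι κ : Type*} [Fintype ι] [DecidableEq ι] [Fintype κ]
    (Φ : Matrix ι ι ℂ →ₗ[ℂ] Matrix κ κ ℂ) (hΦ : (choi Φ).PosSemidef)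
    {X : Matrix ι ι ℂ} (hX : X.PosSemidef) : (Φ X).PosSemidef := by
  obtain ⟨C, hC⟩ : ∃ C : Matrix (ι × κ) (ι × κ) ℂ, choi Φ = Cᴴ * C := by
    classical
    open MatrixOrder in
    obtain ⟨X, hX, -, hXe⟩ := CFC.exists_sqrt_of_isSelfAdjoint_of_quasispectrumRestricts
      hΦ.isHermitian.isSelfAdjoint (QuasispectrumRestricts.nnreal_of_nonneg hΦ.nonneg)
    exact ⟨X, by rw [← hXe]; nth_rw 1 [← hX.star_eq]; rfl⟩
  have hJ : ∀ p q, choi Φ p q = ∑ s, star (C s p) * C s q := by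
    intro p q; rw [hC]; simp [Matrix.mul_apply]
  have key : Φ X = ∑ s : ι × κ,
      (Matrix.of fun (k : κ) (i : ι) => star (C s (i, k))) * X *
      (Matrix.of fun (k : κ) (i : ι) => star (C s (i, k)))ᴴ := by
    ext k l
    simp only [Matrix.sum_apply, Matrix.mul_apply, Matrix.conjTranspose_apply,
      Matrix.of_apply, star_star]
    rw [choi_apply']
    simp_rw [hJ, Finset.mul_sum, Finset.sum_mul]
    conv_lhs => rw [Finset.sum_comm]
    conv_rhs => rw [Finset.sum_comm]
    refine Finset.sum_congr rfl fun j _ => ?_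
    rw [Finset.sum_comm]
    refine Finset.sum_congr rfl fun s _ => Finset.sum_congr rfl fun i _ => ?_
    ring
  rw [key]
  refine Finset.sum_induction _ _ (fun a b ha hb => ha.add hb) .zero
    fun s _ => hX.mul_mul_conjTranspose_same _

/-- Lower bound on the exact single-shot MISC coherence cost: if a MISC
state-to-channel supermap on an `m`-dimensional coherence resource simulates the
channel `N`, then `r_C(N) ≤ m`. -/
theorem coherenceRobust_le_of_MISC_simulation
    {m : ℕ} (hm : 1 ≤ m)
    {A0 A1 : Type*}
    [Fintype A0] [DecidableEq A0] [Nonempty A0]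
    [Fintype A1] [DecidableEq A1] [Nonempty A1]
    (Θ : Matrix (Fin m) (Fin m) ℂ →ₗ[ℂ] (Matrix A0 A0 ℂ →ₗ[ℂ] Matrix A1 A1 ℂ))
    (hCP : (choi (choiMapOf Θ)).PosSemidef)
    (hTP : ∀ ρ : Matrix (Fin m) (Fin m) ℂ, ρ.PosSemidef → ρ.trace = 1 → IsTP (Θ ρ))
    (hMISC : ∀ ρ : Matrix (Fin m) (Fin m) ℂ, ρ.PosSemidef → ρ.trace = 1 → deph ρ = ρ →
      IsChannel (Θ ρ) ∧ IsClassical (Θ ρ))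
    (N : Matrix A0 A0 ℂ →ₗ[ℂ] Matrix A1 A1 ℂ) (hN : IsChannel N)
    (hsim : Θ (maxCoh m) = N) :
    coherenceRobust N ≤ (m : ℝ) := by
  have hm0 : m ≠ 0 := by omega
  have hmC : (m : ℂ) ≠ 0 := Nat.cast_ne_zero.mpr hm0
  set ρd : Matrix (Fin m) (Fin m) ℂ := ((m : ℂ))⁻¹ • 1 with hρd
  have hρdPSD : ρd.PosSemidef := by
    constructor
    · have : star ((m : ℂ))⁻¹ = ((m : ℂ))⁻¹ := by
        rw [star_inv₀, star_natCast]
      simp [Matrix.IsHermitian, hρd, Matrix.conjTranspose_smul, this]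
    · have h2 : (0 : ℂ) ≤ ((m : ℂ))⁻¹ := by
        rw [Complex.nonneg_iff]
        constructor
        · simp only [Complex.inv_re, Complex.natCast_re]
          exact div_nonneg (by positivity) (Complex.normSq_nonneg _)
        · simp
      exact (Matrix.PosSemidef.one.smul h2).2
  have hρdTr : ρd.trace = 1 := by
    simp [hρd, Matrix.trace_smul, Matrix.trace_one, smul_eq_mul]
    rw [inv_mul_cancel₀ hmC]
  have hρdDiag : deph ρd = ρd := by
    ext i j
    by_cases h : i = j <;> simp [deph, hρd, Matrix.one_apply, h]
  obtain ⟨hch, hcl⟩ := hMISC ρd hρdPSD hρdTr hρdDiag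
  -- positive semidefiniteness of 1 - maxCoh m
  have hPH : (maxCoh m)ᴴ = maxCoh m := by
    ext i j
    simp [maxCoh, Matrix.conjTranspose_apply, star_div₀, star_natCast]
  have hPP : maxCoh m * maxCoh m = maxCoh m := by
    ext i j
    simp only [Matrix.mul_apply, maxCoh, Matrix.of_apply, Finset.sum_const,
      Finset.card_univ, Fintype.card_fin, nsmul_eq_mul]
    field_simp
  have heq : ((1 : Matrix (Fin m) (Fin m) ℂ) - maxCoh m)ᴴ *
      ((1 : Matrix (Fin m) (Fin m) ℂ) - maxCoh m) = 1 - maxCoh m := by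
    rw [Matrix.conjTranspose_sub, Matrix.conjTranspose_one, hPH]
    rw [Matrix.sub_mul, Matrix.mul_sub, Matrix.mul_sub, hPP, Matrix.one_mul,
      Matrix.one_mul, Matrix.mul_one]
    abel
  have h1 : ((1 : Matrix (Fin m) (Fin m) ℂ) - maxCoh m).PosSemidef := by
    rw [← heq]
    exact Matrix.posSemidef_conjTranspose_mul_self _
  -- the rewriting of the robustness witness
  have hkey : (m : ℝ) • choi (Θ ρd) - choi N = choiMapOf Θ (1 - maxCoh m) := by
    have e1 : (m : ℝ) • choi (Θ ρd) = choiMapOf Θ ((m : ℂ) • ρd) := by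
      rw [(choiMapOf Θ).map_smul ((m : ℂ)) ρd]
      show (m : ℝ) • choi (Θ ρd) = (m : ℂ) • choi (Θ ρd)
      ext p q
      simp [Complex.real_smul]
    have e2 : choi N = choiMapOf Θ (maxCoh m) := by
      rw [← hsim]; rfl
    rw [e1, e2, ← map_sub]
    congr 1
    rw [hρd, smul_smul, mul_inv_cancel₀ hmC, one_smul]
  have hmemb : (m : ℝ) ∈ {t : ℝ | 0 ≤ t ∧ ∃ E₀ : Matrix A0 A0 ℂ →ₗ[ℂ] Matrix A1 A1 ℂ,
      IsChannel E₀ ∧ IsClassical E₀ ∧ (t • choi E₀ - choi N).PosSemidef} := by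
    refine ⟨by positivity, Θ ρd, hch, hcl, ?_⟩
    rw [hkey]
    exact cp_pos (choiMapOf Θ) hCP h1
  exact csInf_le ⟨0, fun t ht => ht.1⟩ hmemb

end
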